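/- Every τ-compact set of arcs in the infinite strip satisfies condition (B): every marked point that is lower right T-bounded is upper right T-bounded, and every marked point that is upper left T-bounded is lower left T-bounded. -/

import Mathlib

/-- A marked point of the infinite strip `B∞`: an upper point `ℓ i` or a lower point `r j`. -/
inductive MPoint : Type
  | up : ℤ → MPoint
  | low : ℤ → MPoint
deriving DecidableEq

namespace Strip

open MPoint

/-- A curve is an unordered pair of marked points. -/
abbrev Curve := Sym2 MPoint

/-- Edges of the strip: `{ℓ_i, ℓ_{i+1}}` or `{r_i, r_{i+1}}`. -/
def IsEdge (c : Curve) : Prop :=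
  ∃ i : ℤ, c = s(up i, up (i + 1)) ∨ c = s(low i, low (i + 1))

/-- Arcs: non-degenerate, non-edge unordered pairs of marked points. -/
def IsArc (c : Curve) : Prop := ¬ c.IsDiag ∧ ¬ IsEdge c

/-- A connecting arc joins an upper and a lower marked point. -/
def IsConnecting (c : Curve) : Prop := ∃ i j : ℤ, c = s(up i, low j)

/-- The crossing relation on curves of the strip, given by the explicit index
conditions of Liu–Paquette (cases according to the type of `u`). -/
def Crosses (u v : Curve) : Prop :=
  (∃ i j p q : ℤ, ((i < p ∧ p < j ∧ j < q) ∨ (p < i ∧ i < q ∧ q < j)) ∧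
      u = s(up i, up j) ∧ v = s(up p, up q)) ∨
  (∃ i j p q : ℤ, (i < p ∧ p < j) ∧ u = s(up i, up j) ∧ v = s(up p, low q)) ∨
  (∃ i j p q : ℤ, ((i > p ∧ p > j ∧ j > q) ∨ (p > i ∧ i > q ∧ q > j)) ∧
      u = s(low i, low j) ∧ v = s(low p, low q)) ∨
  (∃ i j p q : ℤ, (i > q ∧ q > j) ∧ u = s(low i, low j) ∧ v = s(up p, low q)) ∨
  (∃ i j p q : ℤ, (p < i ∧ i < q) ∧ u = s(up i, low j) ∧ v = s(up p, up q)) ∨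
  (∃ i j p q : ℤ, (p > j ∧ j > q) ∧ u = s(up i, low j) ∧ v = s(low p, low q)) ∨
  (∃ i j p q : ℤ, ((i > p ∧ j > q) ∨ (i < p ∧ j < q)) ∧
      u = s(up i, low j) ∧ v = s(up p, low q))

/-- The translation `τ` on marked points, shifting indices by `+1`. -/
def tauP : MPoint → MPoint
  | up i => up (i + 1)
  | low i => low (i + 1)

/-- The inverse translation `τ⁻¹` on marked points. -/
def tauInvP : MPoint → MPoint
  | up i => up (i - 1)
  | low i => low (i - 1)

/-- The translation `τ` on curves. -/
def tau (c : Curve) : Curve := c.map tauP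

/-- The inverse translation `τ⁻¹` on curves. -/
def tauInv (c : Curve) : Curve := c.map tauInvP

/-- `key p q` is the position of the curve `[p,q]` in the clockwise linear order `>_p`
on the set `[p,−]` of curves at `p`, valued in `ℤ ×ₗ ℤ` (lexicographic order).
For `p = ℓ_P`: curves to upper points right of `p` (tier 2, increasing with index),
then connecting curves (tier 1, decreasing with index),
then curves to upper points left of `p` (tier 0, decreasing with index); dually for lower `p`. -/
def key : MPoint → MPoint → ℤ ×ₗ ℤ
  | up P, up e => if P < e then toLex (2, e) else toLex (0, -e)
  | up _, low c => toLex (1, -c)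
  | low P, low e => if P < e then toLex (2, e) else toLex (0, -e)
  | low _, up c => toLex (1, -c)

/-- `GtAt p u v` means `u >_p v`: `u` and `v` are curves sharing the endpoint `p`
and `u` is bigger than `v` in the clockwise linear order at `p`. -/
def GtAt (p : MPoint) (u v : Curve) : Prop :=
  ∃ x y : MPoint, x ≠ p ∧ y ≠ p ∧ u = s(p, x) ∧ v = s(p, y) ∧ key p y < key p x

/-- `u₃` is a middle term from `u₂` to `u₁`: a curve (arc or edge) with
`u₂ <_{p₁} u₃ <_{p₂} u₁` for some marked points `p₁`, `p₂`. -/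
def IsMiddleTerm (u₂ u₁ u₃ : Curve) : Prop :=
  ¬ u₃.IsDiag ∧ ∃ p₁ p₂ : MPoint, GtAt p₁ u₃ u₂ ∧ GtAt p₂ u₁ u₃

/-- `nc T`: the set of arcs crossing no arc of `T`. -/
def nc (T : Set Curve) : Set Curve :=
  {u | IsArc u ∧ ∀ v ∈ T, ¬ Crosses u v}

/-- `T` is a Ptolemy diagram: a set of arcs such that for any two crossing arcs
`[p,q],[i,j] ∈ T`, those of `[p,i],[p,j],[q,i],[q,j]` which are arcs lie in `T`. -/
def IsPtolemy (T : Set Curve) : Prop :=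
  (∀ u ∈ T, IsArc u) ∧
  ∀ p q i j : MPoint, s(p, q) ∈ T → s(i, j) ∈ T → Crosses s(p, q) s(i, j) →
    (IsArc s(p, i) → s(p, i) ∈ T) ∧ (IsArc s(p, j) → s(p, j) ∈ T) ∧
    (IsArc s(q, i) → s(q, i) ∈ T) ∧ (IsArc s(q, j) → s(q, j) ∈ T)

/-- `T_u`: the set of arcs of `T` crossing `u`. -/
def crossSet (T : Set Curve) (u : Curve) : Set Curve := {v ∈ T | Crosses v u}

/-- `p` is upper left `T`-bounded: `[p, ℓ_i] ∉ T` for all sufficiently small `i`. -/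
def UpperLeftBounded (T : Set Curve) (p : MPoint) : Prop :=
  ∃ j : ℤ, ∀ i : ℤ, i < j → s(p, up i) ∉ T

/-- `p` is upper right `T`-bounded: `[p, ℓ_i] ∉ T` for all sufficiently large `i`. -/
def UpperRightBounded (T : Set Curve) (p : MPoint) : Prop :=
  ∃ j : ℤ, ∀ i : ℤ, i > j → s(p, up i) ∉ T

/-- `p` is lower left `T`-bounded: `[p, r_i] ∉ T` for all sufficiently large `i`. -/
def LowerLeftBounded (T : Set Curve) (p : MPoint) : Prop :=
  ∃ j : ℤ, ∀ i : ℤ, i > j → s(p, low i) ∉ T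

/-- `p` is lower right `T`-bounded: `[p, r_i] ∉ T` for all sufficiently small `i`. -/
def LowerRightBounded (T : Set Curve) (p : MPoint) : Prop :=
  ∃ j : ℤ, ∀ i : ℤ, i < j → s(p, low i) ∉ T

/-- Condition (B): every lower right `T`-bounded marked point is upper right
`T`-bounded, and every upper left `T`-bounded marked point is lower left `T`-bounded. -/
def CondB (T : Set Curve) : Prop :=
  ∀ p : MPoint, (LowerRightBounded T p → UpperRightBounded T p) ∧
    (UpperLeftBounded T p → LowerLeftBounded T p)

/-- Condition (B'): the dual of condition (B). -/
def CondB' (T : Set Curve) : Prop :=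
  ∀ p : MPoint, (LowerLeftBounded T p → UpperLeftBounded T p) ∧
    (UpperRightBounded T p → LowerRightBounded T p)

/-- Condition (C): `T ∪ nc T` contains a connecting arc. -/
def CondC (T : Set Curve) : Prop := ∃ c ∈ T ∪ nc T, IsConnecting c

/-- `S0` is a τ-basis of `Ω`: a subset of `Ω` such that for every `u₁ ∈ Ω` there is
`u₂ ∈ S0` with `τ u₂` crossing `u₁`, and all middle terms from `u₂` to `u₁` lie in `Ω`
whenever `u₂` crosses `u₁`. -/
def IsTauBasis (Ω S0 : Set Curve) : Prop :=
  S0 ⊆ Ω ∧ ∀ u₁ ∈ Ω, ∃ u₂ ∈ S0, Crosses (tau u₂) u₁ ∧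
    (Crosses u₂ u₁ → ∀ u₃ : Curve, IsMiddleTerm u₂ u₁ u₃ → u₃ ∈ Ω)

/-- `T` is τ-compact: for every arc `u`, the set `T_u` admits a finite τ-basis. -/
def TauCompact (T : Set Curve) : Prop :=
  ∀ u : Curve, IsArc u → ∃ S0 : Set Curve, S0.Finite ∧ IsTauBasis (crossSet T u) S0

/-- `T̄`: the set `T` together with all edges of the strip. -/
def withEdges (T : Set Curve) : Set Curve := T ∪ {c | IsEdge c}

end Strip


/-!
Suppose `p` is lower right `T`-bounded, say `[p, r_k] ∉ T` for `k < j`, while `[p, ℓ_i] ∈ T` for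
arbitrarily large `i`. Fix an arc `u` crossing `[p, ℓ_i]` for all large `i`: `[ℓ_{P+1}, r_j]` if
`p = ℓ_P`, and `[r_{P+1}, r_{min j (P-1)}]` if `p = r_P`. A finite τ-basis of `T_u` has bounded
indices, so for `i` large the basis arc `u₂` with `τ u₂` crossing `[p, ℓ_i]` lies far to the left
of `ℓ_i`. The index conditions then leave two possibilities: either `u₂ = [p, r_k]` with `k < j`,
or `u₂` crosses `[p, ℓ_i]` with a middle term that does not cross `u`, i.e. lies outside `T_u`.

The second half of condition (B) is the first half for the reflection exchanging `ℓ_i` and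
`r_i`, which preserves crossings, middle terms, `τ`, and hence τ-compactness.
-/

namespace MPoint

def index : MPoint → ℤ
  | up k => k
  | low k => k

@[simp] lemma index_up (k : ℤ) : (up k).index = k := rfl
@[simp] lemma index_low (k : ℤ) : (low k).index = k := rfl

def reflect : MPoint → MPoint
  | up i => low i
  | low i => up i

@[simp] lemma reflect_up (i : ℤ) : (up i).reflect = low i := rfl
@[simp] lemma reflect_low (i : ℤ) : (low i).reflect = up i := rfl

lemma reflect_involutive : Function.Involutive reflect := by
  rintro (_ | _) <;> rfl

end MPoint

namespace Strip

open MPoint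

/-- Normal form for connecting curves: the upper endpoint comes first. -/
@[simp] lemma mk_low_up (a b : ℤ) : s(low a, up b) = s(up b, low a) := Sym2.eq_swap

lemma curve_cases (c : Curve) :
    (∃ a b, a ≤ b ∧ c = s(up a, up b)) ∨ (∃ a b, c = s(up a, low b)) ∨
      ∃ a b, a ≤ b ∧ c = s(low a, low b) := by
  induction c using Sym2.ind with
  | _ x y =>
    cases x with
    | up a =>
      cases y with
      | up b =>
        rcases le_total a b with h | h
        · exact Or.inl ⟨a, b, h, rfl⟩
        · exact Or.inl ⟨b, a, h, Sym2.eq_swap⟩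
      | low b => exact Or.inr (Or.inl ⟨a, b, rfl⟩)
    | low a =>
      cases y with
      | up b => exact Or.inr (Or.inl ⟨b, a, Sym2.eq_swap⟩)
      | low b =>
        rcases le_total a b with h | h
        · exact Or.inr (Or.inr ⟨a, b, h, rfl⟩)
        · exact Or.inr (Or.inr ⟨b, a, h, Sym2.eq_swap⟩)

section Crossing

variable {a b c d : ℤ}

@[simp] lemma crosses_upper_upper :
    Crosses s(up a, up b) s(up c, up d) ↔
      c ∈ Set.uIoo a b ∧ d ∉ Set.uIcc a b ∨ d ∈ Set.uIoo a b ∧ c ∉ Set.uIcc a b := by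
  simp only [Set.uIoo_eq_union, Set.mem_union, Set.mem_Ioo, Set.mem_uIcc]
  simp only [Crosses, Sym2.eq, Sym2.rel_iff', Prod.mk.injEq, up.injEq, Prod.swap_prod_mk,
    and_or_left, or_and_right, exists_or, existsAndEq, and_true, true_and, reduceCtorEq,
    and_false, false_and, or_self, exists_const, gt_iff_lt, and_self, or_false, not_or, not_and,
    not_le]
  constructor <;> intro h <;> casesm* _ ∨ _ <;> omega

@[simp] lemma crosses_upper_connecting :
    Crosses s(up a, up b) s(up c, low d) ↔ c ∈ Set.uIoo a b := by
  simp [Crosses, Set.uIoo_eq_union, and_or_left, exists_or]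

@[simp] lemma not_crosses_upper_lower : ¬ Crosses s(up a, up b) s(low c, low d) := by
  simp [Crosses]

@[simp] lemma crosses_connecting_upper :
    Crosses s(up a, low b) s(up c, up d) ↔ a ∈ Set.uIoo c d := by
  simp [Crosses, Set.uIoo_eq_union, and_or_left, exists_or]

@[simp] lemma crosses_connecting_connecting :
    Crosses s(up a, low b) s(up c, low d) ↔ c < a ∧ d < b ∨ a < c ∧ b < d := by
  simp [Crosses]

@[simp] lemma crosses_connecting_lower :
    Crosses s(up a, low b) s(low c, low d) ↔ b ∈ Set.uIoo c d := by
  simp [Crosses, Set.uIoo_eq_union, and_or_left, exists_or]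
  omega

@[simp] lemma not_crosses_lower_upper : ¬ Crosses s(low a, low b) s(up c, up d) := by
  simp [Crosses]

@[simp] lemma crosses_lower_connecting :
    Crosses s(low a, low b) s(up c, low d) ↔ d ∈ Set.uIoo a b := by
  simp [Crosses, Set.uIoo_eq_union, and_or_left, exists_or]
  omega

@[simp] lemma crosses_lower_lower :
    Crosses s(low a, low b) s(low c, low d) ↔
      c ∈ Set.uIoo a b ∧ d ∉ Set.uIcc a b ∨ d ∈ Set.uIoo a b ∧ c ∉ Set.uIcc a b := by
  simp only [Set.uIoo_eq_union, Set.mem_union, Set.mem_Ioo, Set.mem_uIcc]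
  simp only [Crosses, Sym2.eq, Sym2.rel_iff', Prod.mk.injEq, reduceCtorEq, and_self,
    Prod.swap_prod_mk, or_self, and_false, exists_const, low.injEq, false_and, gt_iff_lt,
    and_or_left, or_and_right, exists_or, existsAndEq, and_true, true_and, or_false, false_or,
    not_or, not_and, not_le]
  constructor <;> intro h <;> casesm* _ ∨ _ <;> omega

end Crossing

@[simp] lemma tau_mk (x y : MPoint) : tau s(x, y) = s(tauP x, tauP y) := rfl
@[simp] lemma tauP_up (a : ℤ) : tauP (up a) = up (a + 1) := rfl
@[simp] lemma tauP_low (a : ℤ) : tauP (low a) = low (a + 1) := rfl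

lemma isArc_up_low (a b : ℤ) : IsArc s(up a, low b) := by
  simp [IsArc, IsEdge]

lemma isArc_low_low {a b : ℤ} (h : b + 1 < a) : IsArc s(low a, low b) := by
  simp [IsArc, IsEdge]
  exact ⟨by omega, fun x => ⟨by omega, by omega⟩⟩

lemma isMiddleTerm_mk {p₁ p₂ x y : MPoint} (hp : p₁ ≠ p₂) (hx : x ≠ p₁) (hy : y ≠ p₂)
    (h₁ : key p₁ x < key p₁ p₂) (h₂ : key p₂ p₁ < key p₂ y) :
    IsMiddleTerm s(p₁, x) s(p₂, y) s(p₁, p₂) :=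
  ⟨by simpa using hp, p₁, p₂, ⟨p₂, x, hp.symm, hx, rfl, rfl, h₁⟩,
    ⟨y, p₁, hy, hp, rfl, Sym2.eq_swap, h₂⟩⟩

section MiddleTerms

variable {a b P i : ℤ}

lemma isMiddleTerm_upper_upper (hab : a < b) (hPb : P < b) (hbi : b < i) :
    IsMiddleTerm s(up a, up b) s(up P, up i) s(up b, up i) := by
  rw [Sym2.eq_swap (a := up a), Sym2.eq_swap (a := up P)]
  refine isMiddleTerm_mk ?_ ?_ ?_ ?_ ?_ <;>
    simp (disch := omega) [key, if_pos, if_neg, Prod.Lex.toLex_lt_toLex] <;> omega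

lemma isMiddleTerm_connecting_upper (hPa : P < a) (hai : a < i) :
    IsMiddleTerm s(up a, low b) s(up P, up i) s(up a, up i) := by
  rw [Sym2.eq_swap (a := up P)]
  refine isMiddleTerm_mk ?_ ?_ ?_ ?_ ?_ <;>
    simp (disch := omega) [key, if_pos, if_neg, Prod.Lex.toLex_lt_toLex] <;> omega

lemma isMiddleTerm_lower_connecting (hba : b < a) (hPa : P < a) :
    IsMiddleTerm s(low b, low a) s(up i, low P) s(up i, low a) := by
  rw [Sym2.eq_swap (a := low b), Sym2.eq_swap (a := up i) (b := low a)]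
  refine isMiddleTerm_mk ?_ ?_ ?_ ?_ ?_ <;>
    simp (disch := omega) [key, if_neg, Prod.Lex.toLex_lt_toLex] <;> omega

lemma isMiddleTerm_connecting_connecting (hai : a < i) :
    IsMiddleTerm s(up a, low b) s(up i, low P) s(up a, up i) := by
  refine isMiddleTerm_mk ?_ ?_ ?_ ?_ ?_ <;>
    simp (disch := omega) [key, if_pos, if_neg, Prod.Lex.toLex_lt_toLex]
  omega

end MiddleTerms

def maxIndex : Curve → ℤ :=
  Sym2.lift ⟨fun x y => max x.index y.index, fun _ _ => max_comm _ _⟩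

@[simp] lemma maxIndex_mk (x y : MPoint) : maxIndex s(x, y) = max x.index y.index := rfl

section TauCompact

variable {T : Set Curve}

theorem TauCompact.exists_bounded_basis (h : TauCompact T) {u : Curve} (hu : IsArc u) :
    ∃ N : ℤ, ∀ u₁ ∈ crossSet T u, ∃ u₂ ∈ crossSet T u, maxIndex u₂ ≤ N ∧
      Crosses (tau u₂) u₁ ∧ (Crosses u₂ u₁ → ∀ u₃, IsMiddleTerm u₂ u₁ u₃ → u₃ ∈ crossSet T u) := by
  obtain ⟨S, hS, hSsub, hbasis⟩ := h u hu
  obtain ⟨N, hN⟩ := (hS.image maxIndex).bddAbove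
  refine ⟨N, fun u₁ hu₁ => ?_⟩
  obtain ⟨u₂, hu₂, hτ, hmid⟩ := hbasis u₁ hu₁
  exact ⟨u₂, hSsub hu₂, hN ⟨u₂, hu₂, rfl⟩, hτ, hmid⟩

theorem TauCompact.upperRightBounded_of_lowerRightBounded_up (h : TauCompact T) {P : ℤ}
    (hP : LowerRightBounded T (up P)) : UpperRightBounded T (up P) := by
  obtain ⟨j, hj⟩ := hP
  obtain ⟨N, hN⟩ := h.exists_bounded_basis (isArc_up_low (P + 1) j)
  refine ⟨max N P + 1, fun i hi hiT => ?_⟩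
  obtain ⟨u₂, ⟨hu₂T, hu₂u⟩, hu₂N, hτ, hmid⟩ :=
    hN _ ⟨hiT, by simp [Set.uIoo_eq_union]; omega⟩
  rcases curve_cases u₂ with ⟨a, b, hab, rfl⟩ | ⟨a, b, rfl⟩ | ⟨a, b, -, rfl⟩
  · have hPb : a + 1 < P ∧ P + 1 < b ∧ b ≤ N := by
      simp [Set.uIoo_eq_union, Set.mem_uIcc] at hu₂u hu₂N hτ; omega
    have hm := (hmid (by simp [Set.uIoo_eq_union, Set.mem_uIcc]; omega) _
      (isMiddleTerm_upper_upper (by omega) (by omega) (by omega))).2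
    simp [Set.uIoo_eq_union] at hm; omega
  · have hPa : P ≤ a ∧ a ≤ N := by
      simp [Set.uIoo_eq_union] at hu₂N hτ; omega
    obtain rfl | haP := eq_or_ne a P
    · exact hj b (by simp at hu₂u; omega) hu₂T
    have hm := (hmid (by simp [Set.uIoo_eq_union]; omega) _
      (isMiddleTerm_connecting_upper (b := b) (by omega) (by omega))).2
    simp [Set.uIoo_eq_union] at hm; omega
  · exact not_crosses_lower_upper hτ

theorem TauCompact.upperRightBounded_of_lowerRightBounded_low (h : TauCompact T) {P : ℤ}
    (hP : LowerRightBounded T (low P)) : UpperRightBounded T (low P) := by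
  obtain ⟨j, hj⟩ := hP
  obtain ⟨N, hN⟩ :=
    h.exists_bounded_basis (isArc_low_low (a := P + 1) (b := min j (P - 1)) (by omega))
  refine ⟨max N P + 1, fun i hi hiT => ?_⟩
  rw [mk_low_up] at hiT
  obtain ⟨u₂, ⟨hu₂T, hu₂u⟩, hu₂N, hτ, hmid⟩ := hN _ ⟨hiT, by simp [Set.uIoo_eq_union]⟩
  rcases curve_cases u₂ with ⟨a, b, -, rfl⟩ | ⟨a, b, rfl⟩ | ⟨b, a, hba, rfl⟩
  · exact not_crosses_upper_lower hu₂u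
  · have hab : a < i ∧ b < P := by
      simp at hu₂N hτ; omega
    exact not_crosses_upper_lower
      (hmid (by simp; omega) _ (isMiddleTerm_connecting_connecting (by omega))).2
  · have hPa : b + 1 < P ∧ P < a + 1 := by
      simp [Set.uIoo_eq_union] at hτ; omega
    obtain rfl | haP := eq_or_ne a P
    · exact hj b (by simp [Set.uIoo_eq_union, Set.mem_uIcc] at hu₂u; omega) (by rwa [Sym2.eq_swap])
    have hm := (hmid (by simp [Set.uIoo_eq_union]; omega) _
      (isMiddleTerm_lower_connecting (by omega) (by omega))).2
    simp [Set.uIoo_eq_union] at hm; omega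

theorem TauCompact.upperRightBounded_of_lowerRightBounded (h : TauCompact T) :
    ∀ p : MPoint, LowerRightBounded T p → UpperRightBounded T p
  | up _ => h.upperRightBounded_of_lowerRightBounded_up
  | low _ => h.upperRightBounded_of_lowerRightBounded_low

theorem TauCompact.preimage (h : TauCompact T) {σ : Curve → Curve}
    (hσ : Function.Involutive σ) (hcross : ∀ u v, Crosses (σ u) (σ v) ↔ Crosses u v)
    (htau : ∀ u, tau (σ u) = σ (tau u))
    (hmid : ∀ u₂ u₁ u₃, IsMiddleTerm u₂ u₁ u₃ → IsMiddleTerm (σ u₂) (σ u₁) (σ u₃))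
    (harc : ∀ u, IsArc u → IsArc (σ u)) : TauCompact (σ ⁻¹' T) := by
  intro u hu
  obtain ⟨S, hS, hSsub, hbasis⟩ := h (σ u) (harc u hu)
  refine ⟨σ ⁻¹' S, hS.preimage hσ.injective.injOn, fun v hv => ?_, fun u₁ hu₁ => ?_⟩
  · exact ⟨(hSsub hv).1, (hcross v u).1 (hSsub hv).2⟩
  obtain ⟨w, hwS, hwτ, hwmid⟩ := hbasis (σ u₁) ⟨hu₁.1, (hcross u₁ u).2 hu₁.2⟩
  refine ⟨σ w, by simpa [hσ w] using hwS, ?_, fun hc u₃ hm => ?_⟩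
  · rwa [← hcross, htau, hσ (tau w)]
  · have := hwmid (by rwa [← hcross, hσ w] at hc) (σ u₃) (by simpa [hσ _] using hmid _ _ _ hm)
    exact ⟨this.1, (hcross u₃ u).1 this.2⟩

end TauCompact

def reflect (c : Curve) : Curve := c.map MPoint.reflect

@[simp] lemma reflect_mk (x y : MPoint) : reflect s(x, y) = s(x.reflect, y.reflect) := rfl

lemma reflect_involutive : Function.Involutive reflect := by
  intro c
  induction c using Sym2.ind with
  | _ x y => simp [MPoint.reflect_involutive x, MPoint.reflect_involutive y]

lemma isDiag_reflect_iff {c : Curve} : (reflect c).IsDiag ↔ c.IsDiag :=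
  Sym2.isDiag_map MPoint.reflect_involutive.injective

lemma crosses_reflect_iff {u v : Curve} : Crosses (reflect u) (reflect v) ↔ Crosses u v := by
  rcases curve_cases u with ⟨a, b, -, rfl⟩ | ⟨a, b, rfl⟩ | ⟨a, b, -, rfl⟩ <;>
    rcases curve_cases v with ⟨c, d, -, rfl⟩ | ⟨c, d, rfl⟩ | ⟨c, d, -, rfl⟩ <;>
    simp [and_comm]

lemma tau_reflect (c : Curve) : tau (reflect c) = reflect (tau c) := by
  induction c using Sym2.ind with
  | _ x y => cases x <;> cases y <;> rfl

lemma key_reflect (p x : MPoint) : key p.reflect x.reflect = key p x := by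
  cases p <;> cases x <;> rfl

lemma GtAt.reflect {p : MPoint} {u v : Curve} (h : GtAt p u v) :
    GtAt p.reflect (reflect u) (reflect v) := by
  obtain ⟨x, y, hx, hy, rfl, rfl, hk⟩ := h
  exact ⟨x.reflect, y.reflect, MPoint.reflect_involutive.injective.ne hx,
    MPoint.reflect_involutive.injective.ne hy, rfl, rfl, by rwa [key_reflect, key_reflect]⟩

lemma IsMiddleTerm.reflect {u₂ u₁ u₃ : Curve} (h : IsMiddleTerm u₂ u₁ u₃) :
    IsMiddleTerm (reflect u₂) (reflect u₁) (reflect u₃) := by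
  obtain ⟨hd, p₁, p₂, h₁, h₂⟩ := h
  exact ⟨by rwa [isDiag_reflect_iff], p₁.reflect, p₂.reflect, h₁.reflect, h₂.reflect⟩

lemma IsEdge.reflect {c : Curve} (h : IsEdge c) : IsEdge (reflect c) := by
  obtain ⟨k, rfl | rfl⟩ := h
  exacts [⟨k, Or.inr rfl⟩, ⟨k, Or.inl rfl⟩]

lemma IsArc.reflect {c : Curve} (h : IsArc c) : IsArc (reflect c) :=
  ⟨by rw [isDiag_reflect_iff]; exact h.1,
    fun he => h.2 (by simpa [reflect_involutive c] using he.reflect)⟩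

section Reflection

variable {T : Set Curve} {p : MPoint}

lemma lowerRightBounded_preimage_reflect :
    LowerRightBounded (reflect ⁻¹' T) p.reflect ↔ UpperLeftBounded T p := by
  simp [LowerRightBounded, UpperLeftBounded, MPoint.reflect_involutive p]

lemma upperRightBounded_preimage_reflect :
    UpperRightBounded (reflect ⁻¹' T) p.reflect ↔ LowerLeftBounded T p := by
  simp [UpperRightBounded, LowerLeftBounded, MPoint.reflect_involutive p]

theorem TauCompact.preimage_reflect (h : TauCompact T) : TauCompact (reflect ⁻¹' T) :=
  h.preimage reflect_involutive (fun _ _ => crosses_reflect_iff) tau_reflect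
    (fun _ _ _ => IsMiddleTerm.reflect) (fun _ => IsArc.reflect)

theorem TauCompact.lowerLeftBounded_of_upperLeftBounded (h : TauCompact T)
    (hp : UpperLeftBounded T p) : LowerLeftBounded T p :=
  upperRightBounded_preimage_reflect.1 <|
    h.preimage_reflect.upperRightBounded_of_lowerRightBounded _
      (lowerRightBounded_preimage_reflect.2 hp)

end Reflection

end Strip

open Strip in
theorem tauCompact_condB_general (T : Set Curve) (h : TauCompact T) : CondB T :=
  fun p => ⟨h.upperRightBounded_of_lowerRightBounded p, h.lowerLeftBounded_of_upperLeftBounded⟩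

open Strip in
/-- Every τ-compact set of arcs satisfies condition (B). -/
theorem tauCompact_condB (T : Set Curve) (hT : ∀ c ∈ T, IsArc c)
    (h : TauCompact T) : CondB T :=
  tauCompact_condB_general T h
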